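/- Let G be a stably dissipative black-and-white graph, let i be a ∘-endpoint of G with unique neighbour i′, and let T_i(G) be the trimmed graph. If T_i(G) has constant rank, then G has constant rank and rank(G) = rank(T_i(G)); that is, if every dissipative matrix B with G_B = T_i(G) has rank r, then every dissipative matrix A with G_A = G has rank r. -/

import Mathlib

open Matrix

/-- A real `n × n` matrix `A` is dissipative if there is a positive diagonal
matrix `D = diag d` such that `xᵀ A D x ≤ 0` for all `x`. -/
def IsDissipative {n : ℕ} (A : Matrix (Fin n) (Fin n) ℝ) : Prop :=
  ∃ d : Fin n → ℝ, (∀ i, 0 < d i) ∧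
    ∀ x : Fin n → ℝ, ∑ i, ∑ j, x i * A i j * d j * x j ≤ 0

/-- The graph `G_A` of a matrix `A`: vertices `1, …, n`, with an edge between
`i ≠ j` iff `a_ij ≠ 0` or `a_ji ≠ 0`. -/
def graphOf {n : ℕ} (A : Matrix (Fin n) (Fin n) ℝ) : SimpleGraph (Fin n) where
  Adj i j := i ≠ j ∧ (A i j ≠ 0 ∨ A j i ≠ 0)
  symm := ⟨fun _ _ h => ⟨h.1.symm, h.2.symm⟩⟩
  loopless := ⟨fun _ h => h.1 rfl⟩

/-- A black-and-white graph is stably dissipative iff every cycle contains at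
least one edge joining two black vertices. -/
def IsStablyDissipativeGraph {V : Type*} (G : SimpleGraph V)
    (black : V → Prop) : Prop :=
  ∀ (v : V) (w : G.Walk v v), w.IsCycle →
    ∃ i j : V, s(i, j) ∈ w.edges ∧ black i ∧ black j

/-- The trimmed graph `T_i(G)`: remove from `G` every edge incident with `i'`
other than the edge `{i, i'}`. -/
def trimGraph {V : Type*} (G : SimpleGraph V) (i i' : V) : SimpleGraph V where
  Adj k l := G.Adj k l ∧ ((k ≠ i' ∧ l ≠ i') ∨ (k = i ∧ l = i') ∨ (k = i' ∧ l = i))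
  symm := by
    constructor
    intro k l h
    exact ⟨h.1.symm, by tauto⟩
  loopless := by
    constructor
    intro k h
    exact G.irrefl h.1

/-! Since `i` is white and adjacent only to `i'`, row and column `i` of `A` vanish off `i'`, and
testing dissipativity on vectors supported on `{i, i'}` gives `a_ii' d_i' + a_i'i d_i = 0`, so
both `a_ii'` and `a_i'i` are nonzero. Using them as pivots, row and column operations clear the
rest of row and column `i'` without changing the rank. The resulting matrix has graph `T_i(G)` and
the same diagonal, and it is dissipative with the same `D`: its form at `x` is the form of `A` at
`x` with `x_i'` set to `0` plus the form of `A` at the restriction of `x` to `{i, i'}`. -/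

namespace Matrix

variable {ι : Type*} [Fintype ι] [DecidableEq ι]

def scaledQuadForm (A : Matrix ι ι ℝ) (d x : ι → ℝ) : ℝ :=
  ∑ k, ∑ l, x k * A k l * d l * x l

/-- The matrix analogue of `trimGraph`: row and column `j` are cleared outside rows and columns
`i` and `j`. -/
def trimAt {ι α : Type*} [DecidableEq ι] [Zero α] (A : Matrix ι ι α) (i j : ι) : Matrix ι ι α :=
  of fun k l => if (k = j ∧ l ≠ i ∧ l ≠ j) ∨ (l = j ∧ k ≠ i ∧ k ≠ j) then 0 else A k l

@[simp]
lemma trimAt_apply_self {ι α : Type*} [DecidableEq ι] [Zero α] (A : Matrix ι ι α) (i j k : ι) :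
    A.trimAt i j k k = A k k := by
  simp +contextual [trimAt]

lemma scaledQuadForm_single_add_single (A : Matrix ι ι ℝ) (d : ι → ℝ) (i j : ι) (s t : ℝ) :
    scaledQuadForm A d (Pi.single i s + Pi.single j t) =
      s * A i i * d i * s + s * A i j * d j * t + t * A j i * d i * s + t * A j j * d j * t := by
  simp [scaledQuadForm, Pi.single_apply, add_mul, mul_add, Finset.sum_add_distrib]
  ring

lemma scaledQuadForm_trimAt (A : Matrix ι ι ℝ) (d x : ι → ℝ) {i j : ι} (hii : A i i = 0) :
    scaledQuadForm (A.trimAt i j) d x =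
      scaledQuadForm A d (Function.update x j 0) +
        scaledQuadForm A d (Pi.single i (x i) + Pi.single j (x j)) := by
  simp only [scaledQuadForm, ← Finset.sum_add_distrib]
  refine Finset.sum_congr rfl fun k _ => Finset.sum_congr rfl fun l _ => ?_
  simp only [trimAt, of_apply, Function.update_apply, Pi.add_apply, Pi.single_apply]
  split_ifs <;> simp_all

lemma eq_zero_of_forall_mul_add_nonpos {c b : ℝ} (h : ∀ t : ℝ, t * c + b ≤ 0) : c = 0 := by
  by_contra hc
  have := h ((1 - b) / c)
  rw [div_mul_cancel₀ _ hc] at this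
  linarith

/-- A zero diagonal entry `a_ii` makes the form linear in `x_i`, so its coefficient must vanish. -/
lemma mul_add_mul_eq_zero_of_scaledQuadForm_nonpos {A : Matrix ι ι ℝ} {d : ι → ℝ}
    (hA : ∀ x, scaledQuadForm A d x ≤ 0) {i j : ι} (hii : A i i = 0) :
    A i j * d j + A j i * d i = 0 :=
  eq_zero_of_forall_mul_add_nonpos (b := A j j * d j) fun t => by
    have := hA (Pi.single i t + Pi.single j 1)
    rw [scaledQuadForm_single_add_single, hii] at this
    linarith

lemma isUnit_one_sub_vecMulVec {K : Type*} [Field K] {u w : ι → K} (h : w ⬝ᵥ u = 0) :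
    IsUnit (1 - vecMulVec u w) :=
  IsNilpotent.isUnit_one_sub ⟨2, by rw [pow_two, vecMulVec_mul_vecMulVec, h, zero_smul]; simp⟩

/-- `A.trimAt i j` is obtained from `A` by subtracting multiples of the pivot row `i` (supported
at `j`) from the other rows and of the pivot column `i` from the other columns. -/
theorem rank_trimAt {K : Type*} [Field K] {A : Matrix ι ι K} {i j : ι} (hij : i ≠ j)
    (hrow : ∀ l, l ≠ j → A i l = 0) (hcol : ∀ k, k ≠ j → A k i = 0)
    (hAij : A i j ≠ 0) (hAji : A j i ≠ 0) : (A.trimAt i j).rank = A.rank := by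
  set u : ι → K := fun k => if k = i ∨ k = j then 0 else A k j / A i j
  set v : ι → K := fun l => if l = i ∨ l = j then 0 else A j l / A j i
  have hP : IsUnit (1 - vecMulVec u (Pi.single i 1)) := isUnit_one_sub_vecMulVec (by simp [u])
  have hQ : IsUnit (1 - vecMulVec (Pi.single i 1) v) := isUnit_one_sub_vecMulVec (by simp [v])
  have hprod : (1 - vecMulVec u (Pi.single i 1)) * A * (1 - vecMulVec (Pi.single i 1) v) =
      A.trimAt i j := by
    ext k l
    have hii : A i i = 0 := hrow i hij
    simp only [sub_mul, mul_sub, one_mul, mul_one, vecMulVec_mul, mul_vecMulVec, single_one_vecMul,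
      mulVec_single_one, sub_apply, vecMulVec_apply, col_apply, row_apply, hii, u, v, trimAt,
      of_apply]
    by_cases hk : k = j <;> by_cases hl : l = j <;> by_cases hki : k = i <;> by_cases hli : l = i <;>
      simp_all [mul_div_cancel₀]
  rw [← hprod, rank_mul_eq_left_of_isUnit_det _ _ ((isUnit_iff_isUnit_det _).mp hQ),
    rank_mul_eq_right_of_isUnit_det _ _ ((isUnit_iff_isUnit_det _).mp hP)]

end Matrix

lemma graphOf_trimAt {n : ℕ} (A : Matrix (Fin n) (Fin n) ℝ) (i j : Fin n) :
    graphOf (A.trimAt i j) = trimGraph (graphOf A) i j := by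
  ext k l
  simp only [graphOf, trimGraph, trimAt, of_apply]
  by_cases hk : k = j <;> by_cases hl : l = j <;> by_cases hki : k = i <;> by_cases hli : l = i <;>
    simp_all

lemma eq_zero_of_not_graphOf_adj {n : ℕ} {A : Matrix (Fin n) (Fin n) ℝ} {k l : Fin n}
    (hkl : k ≠ l) (h : ¬(graphOf A).Adj k l) : A k l = 0 ∧ A l k = 0 := by
  simpa [graphOf, hkl] using h

namespace IsDissipative

variable {n : ℕ} {A : Matrix (Fin n) (Fin n) ℝ} {i j : Fin n}

lemma eq_zero_iff_eq_zero (hA : IsDissipative A) (hii : A i i = 0) : A i j = 0 ↔ A j i = 0 := by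
  obtain ⟨d, hd, hform⟩ := hA
  have h := mul_add_mul_eq_zero_of_scaledQuadForm_nonpos (j := j) hform hii
  constructor <;> intro h0 <;> simp only [h0, zero_mul, zero_add, add_zero] at h <;>
    exact (mul_eq_zero.mp h).resolve_right (hd _).ne'

lemma trimAt (hA : IsDissipative A) (hii : A i i = 0) : IsDissipative (A.trimAt i j) := by
  obtain ⟨d, hd, hform⟩ := hA
  refine ⟨d, hd, fun x => ?_⟩
  change scaledQuadForm _ d x ≤ 0
  rw [scaledQuadForm_trimAt A d x hii]
  exact add_nonpos (hform _) (hform _)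

end IsDissipative

theorem stmt14_general {n : ℕ} (G : SimpleGraph (Fin n)) (black : Set (Fin n))
    (i i' : Fin n) (hwhite : i ∉ black) (hadj : G.Adj i i')
    (huniq : ∀ j, G.Adj i j → j = i') (r : ℕ)
    (hT : ∀ B : Matrix (Fin n) (Fin n) ℝ, IsDissipative B →
      graphOf B = trimGraph G i i' → (∀ k, B k k < 0 ↔ k ∈ black) →
      (∀ k, k ∉ black → B k k = 0) → B.rank = r) :
    ∀ A : Matrix (Fin n) (Fin n) ℝ, IsDissipative A → graphOf A = G →
      (∀ k, A k k < 0 ↔ k ∈ black) → (∀ k, k ∉ black → A k k = 0) →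
      A.rank = r := by
  rintro A hA rfl hAb hAw
  have hii : A i i = 0 := hAw i hwhite
  have hsupp : ∀ l, l ≠ i' → A i l = 0 ∧ A l i = 0 := fun l hl => by
    rcases eq_or_ne l i with rfl | hli
    · exact ⟨hii, hii⟩
    · exact eq_zero_of_not_graphOf_adj hli.symm fun h => hl (huniq l h)
  have hpair : A i i' = 0 ↔ A i' i = 0 := hA.eq_zero_iff_eq_zero hii
  have hedge : A i i' ≠ 0 ∨ A i' i ≠ 0 := hadj.2
  have hAii' : A i i' ≠ 0 ∧ A i' i ≠ 0 := by tauto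
  rw [← rank_trimAt hadj.ne (fun l hl => (hsupp l hl).1) (fun k hk => (hsupp k hk).2) hAii'.1
    hAii'.2]
  exact hT _ (hA.trimAt hii) (graphOf_trimAt A i i') (by simpa using hAb) (by simpa using hAw)

/-- Trimming lemma.  Let `G` be a stably dissipative black-and-white graph,
`i` a ∘-endpoint with unique neighbour `i'`, and `T_i(G)` the trimmed graph.
If `T_i(G)` has constant rank `r` (every dissipative matrix `B` with
`G_B = T_i(G)` has rank `r`), then so has `G`: every dissipative matrix `A`
with `G_A = G` has rank `r`. -/
theorem stmt14 {n : ℕ} (G : SimpleGraph (Fin n)) (black : Set (Fin n))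
    (hsd : IsStablyDissipativeGraph G (· ∈ black))
    (i i' : Fin n) (hwhite : i ∉ black) (hadj : G.Adj i i')
    (huniq : ∀ j, G.Adj i j → j = i') (r : ℕ)
    (hT : ∀ B : Matrix (Fin n) (Fin n) ℝ, IsDissipative B →
      graphOf B = trimGraph G i i' → (∀ k, B k k < 0 ↔ k ∈ black) →
      (∀ k, k ∉ black → B k k = 0) → B.rank = r) :
    ∀ A : Matrix (Fin n) (Fin n) ℝ, IsDissipative A → graphOf A = G →
      (∀ k, A k k < 0 ↔ k ∈ black) → (∀ k, k ∉ black → A k k = 0) →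
      A.rank = r :=
  stmt14_general G black i i' hwhite hadj huniq r hT
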